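/- arXiv:0910.4515 — 2 statements merged into one kernel-verified Lean document; each statement's English description precedes it below -/
import Mathlib

section
/- Let D ∈ P(n,p) be lower triangular (D_{i,j} = 0 whenever i < j) and let μ := D^T·𝟙 be its vector of column sums. Then (∏_{i>j} D_{i,j}!) · A_D = (∏_{j=1}^{p−1} ∏_{i=j+1}^{p} A_{i→j}^{D_{i,j}}) · I_μ, where the (non-commuting) double product is taken left to right with the pairs (j,i) in lexicographic order (j increasing, and for fixed j, i increasing), and I_μ := A_{μ_1 E_{1,1} + ⋯ + μ_p E_{p,p}}. -/
/-!
Entry `(a, b)` of the ordered product is a sum over chains of words from `a` to `b` in which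
the factor `A_{i→j}^m` turns exactly `m` letters `i` into `j`, in any of `m!` orders. The
targets `j` never decrease along the product and every source satisfies `i > j`, so a letter
that has been lowered is never moved again: a nonzero chain is determined by `(a, b)`, and it
exists iff every letter of `a` is kept or lowered in `b`, with exactly `D_{ij}` letters `i`
lowered to `j`. The diagonal factor `I_μ` forces `b` to have content `μ`, and for lower
triangular `D` these conditions together say exactly `D(a, b) = D`.
-/

open scoped Classical
open Matrix

noncomputable section

/-- `D(a,b) ∈ ℕ^{p×p}`: `D(a,b)_{i,j}` counts positions `k` with `a_k = i` and `b_k = j`. -/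
def Dmat {n p : ℕ} (a b : Fin n → Fin p) : Matrix (Fin p) (Fin p) ℕ :=
  Matrix.of fun i j => (Finset.univ.filter fun k => a k = i ∧ b k = j).card

/-- The 0/1 matrix `A_D` with `(A_D)_{a,b} = 1` iff `D(a,b) = D`. -/
def AD (n p : ℕ) (D : Matrix (Fin p) (Fin p) ℕ) :
    Matrix (Fin n → Fin p) (Fin n → Fin p) ℂ :=
  Matrix.of fun a b => if Dmat a b = D then 1 else 0

/-- The 0/1 matrix `A_{i→j}` with `(A_{i→j})_{a,b} = 1` iff `b` is obtained from `a` by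
changing one symbol `i` into a `j` (at some position `k`, all other positions agreeing). -/
def Aarrow (n p : ℕ) (i j : Fin p) : Matrix (Fin n → Fin p) (Fin n → Fin p) ℂ :=
  Matrix.of fun a b =>
    if ∃ k, a k = i ∧ b k = j ∧ ∀ l, l ≠ k → a l = b l then 1 else 0

/-- The matrix unit `E_{k,l} ∈ ℕ^{p×p}`. -/
def Emat (p : ℕ) (k l : Fin p) : Matrix (Fin p) (Fin p) ℕ :=
  Matrix.of fun r s => if r = k ∧ s = l then 1 else 0

/-- The ordered (noncommutative) product `∏_{j=1}^{p-1} ∏_{i=j+1}^{p} A_{i→j}^{D_{i,j}}`,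
with the pairs `(j,i)` taken left to right in lexicographic order. -/
noncomputable def arrowProd (n p : ℕ) (D : Matrix (Fin p) (Fin p) ℕ) :
    Matrix (Fin n → Fin p) (Fin n → Fin p) ℂ :=
  ((List.finRange p).map fun j =>
    (((List.finRange p).filter fun i => decide (j < i)).map fun i =>
      Aarrow n p i j ^ D i j).prod).prod

open Finset Function

variable {n p : ℕ}

lemma Dmat_apply (a b : Fin n → Fin p) (r s : Fin p) :
    Dmat a b r s = #{k | a k = r ∧ b k = s} := rfl

lemma Dmat_apply_pos (a b : Fin n → Fin p) (k : Fin n) : 0 < Dmat a b (a k) (b k) := by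
  rw [Dmat_apply]
  exact card_pos.mpr ⟨k, by simp⟩

lemma sum_Dmat_col (a b : Fin n → Fin p) (s : Fin p) :
    ∑ r, Dmat a b r s = #{k | b k = s} := by
  rw [card_eq_sum_card_fiberwise (f := a) (t := univ) fun _ _ => mem_univ _]
  refine sum_congr rfl fun r _ => ?_
  rw [filter_filter, Dmat_apply]
  simp only [and_comm]

lemma Matrix.eq_of_offDiag_eq_of_sum_col_eq {ι α : Type*} [Fintype ι] [DecidableEq ι]
    [AddCancelCommMonoid α] {M N : Matrix ι ι α} (hoff : ∀ r s, r ≠ s → M r s = N r s)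
    (hcol : ∀ s, ∑ r, M r s = ∑ r, N r s) : M = N := by
  ext r s
  obtain hrs | rfl := ne_or_eq r s
  · exact hoff r s hrs
  have h := hcol r
  rwa [← add_sum_erase _ _ (mem_univ r), ← add_sum_erase _ (N · r) (mem_univ r),
    sum_congr rfl fun t ht => hoff t r (ne_of_mem_erase ht), add_left_inj] at h

lemma Dmat_eq_diagonal_iff (μ : Fin p → ℕ) (c b : Fin n → Fin p) :
    Dmat c b = diagonal μ ↔ c = b ∧ ∀ s, #{k | b k = s} = μ s := by
  constructor
  · intro h
    obtain rfl : c = b := funext fun k => by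
      by_contra hk
      simpa [h, diagonal_apply_ne _ hk] using Dmat_apply_pos c b k
    refine ⟨rfl, fun s => ?_⟩
    simpa [h, diagonal_apply] using (sum_Dmat_col c c s).symm
  · rintro ⟨rfl, hμ⟩
    refine Matrix.eq_of_offDiag_eq_of_sum_col_eq (fun r s hrs => ?_) fun s => ?_
    · rw [diagonal_apply_ne _ hrs, Dmat_apply, card_eq_zero, filter_eq_empty_iff]
      rintro k - ⟨rfl, rfl⟩
      exact hrs rfl
    · simp [sum_Dmat_col, hμ, diagonal_apply]

lemma mul_AD_diagonal_apply (M : Matrix (Fin n → Fin p) (Fin n → Fin p) ℂ)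
    (μ : Fin p → ℕ) (a b : Fin n → Fin p) :
    (M * AD n p (diagonal μ)) a b = if ∀ s, #{k | b k = s} = μ s then M a b else 0 := by
  simp only [mul_apply, AD, of_apply, Dmat_eq_diagonal_iff, ite_and, mul_ite, mul_one,
    mul_zero, sum_ite_eq', mem_univ, if_true]

def ChangesWithin (L : List (Fin p × Fin p)) (a b : Fin n → Fin p) : Prop :=
  ∀ k, a k = b k ∨ (a k, b k) ∈ L

def IsRelabeling (L : List (Fin p × Fin p)) (D : Matrix (Fin p) (Fin p) ℕ)
    (a b : Fin n → Fin p) : Prop :=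
  ChangesWithin L a b ∧ ∀ q ∈ L, Dmat a b q.1 q.2 = D q.1 q.2

lemma changesWithin_nil_iff (a b : Fin n → Fin p) : ChangesWithin [] a b ↔ a = b := by
  simp [ChangesWithin, funext_iff]

lemma Aarrow_apply (i j : Fin p) (a c : Fin n → Fin p) :
    Aarrow n p i j a c = if ∃ k, a k = i ∧ update a k j = c then 1 else 0 := by
  simp only [Aarrow, of_apply, update_eq_iff, @eq_comm _ j]

lemma sum_Aarrow_mul {i j : Fin p} (hij : i ≠ j) (a : Fin n → Fin p)
    (g : (Fin n → Fin p) → ℂ) :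
    ∑ c, Aarrow n p i j a c * g c = ∑ k with a k = i, g (update a k j) := by
  have hA : ∀ c, Aarrow n p i j a c =
      if c ∈ image (update a · j) {k | a k = i} then 1 else 0 := fun c => by
    simp [Aarrow_apply]
  simp only [hA, ite_mul, one_mul, zero_mul, sum_ite_mem, univ_inter]
  refine sum_image fun k hk k' _ h => by_contra fun hne => hij ?_
  simp only [coe_filter, mem_univ, true_and, Set.mem_ofPred_eq] at hk
  simpa [hk, hne] using (congrFun h k).symm

lemma Dmat_eq_zero_iff (a b : Fin n → Fin p) (r s : Fin p) :
    Dmat a b r s = 0 ↔ ∀ k, ¬(a k = r ∧ b k = s) := by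
  simp [Dmat_apply, filter_eq_empty_iff]

lemma Dmat_update_add_one {i j : Fin p} (hij : i ≠ j) {a b : Fin n → Fin p} {k : Fin n}
    (hak : a k = i) (hbk : b k = j) : Dmat (update a k j) b i j + 1 = Dmat a b i j := by
  have : ({l | update a k j l = i ∧ b l = j} : Finset (Fin n)) =
      ({l | a l = i ∧ b l = j} : Finset (Fin n)).erase k := by
    ext l
    obtain rfl | hl := eq_or_ne l k <;> simp [*, hij.symm]
  rw [Dmat_apply, Dmat_apply, this, card_erase_add_one (by simp [hak, hbk])]

lemma changesWithin_update_iff {i j : Fin p} {a : Fin n → Fin p} {k : Fin n} (hak : a k = i)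
    (b : Fin n → Fin p) :
    ChangesWithin [(i, j)] (update a k j) b ↔ ChangesWithin [(i, j)] a b ∧ b k = j := by
  simp only [ChangesWithin, List.mem_singleton, Prod.mk.injEq]
  refine ⟨fun h => ?_, fun ⟨h, hbk⟩ l => ?_⟩
  · have hbk : b k = j := by
      rcases h k with h | h
      · simpa using h.symm
      · exact h.2
    refine ⟨fun l => ?_, hbk⟩
    obtain rfl | hl := eq_or_ne l k
    · exact Or.inr ⟨hak, hbk⟩
    · simpa [hl] using h l
  · obtain rfl | hl := eq_or_ne l k
    · simp [hbk]
    · simpa [hl] using h l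

lemma pow_Aarrow_apply {i j : Fin p} (hij : i ≠ j) (m : ℕ) (a b : Fin n → Fin p) :
    (Aarrow n p i j ^ m) a b =
      if ChangesWithin [(i, j)] a b ∧ Dmat a b i j = m then (m.factorial : ℂ) else 0 := by
  induction m generalizing a with
  | zero =>
    have : ChangesWithin [(i, j)] a b ∧ Dmat a b i j = 0 ↔ a = b := by
      simp only [ChangesWithin, List.mem_singleton, Prod.mk.injEq, Dmat_eq_zero_iff]
      refine ⟨fun ⟨h, h0⟩ => funext fun k => (h k).resolve_right (h0 k), ?_⟩
      rintro rfl
      exact ⟨fun _ => Or.inl rfl, fun k ⟨hi, hj⟩ => hij (hi.symm.trans hj)⟩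
    simp [one_apply, this]
  | succ m ih =>
    rw [pow_succ', mul_apply, sum_Aarrow_mul hij]
    have hstep : ∀ k ∈ ({k | a k = i} : Finset (Fin n)),
        (ChangesWithin [(i, j)] (update a k j) b ∧ Dmat (update a k j) b i j = m) ↔
          (ChangesWithin [(i, j)] a b ∧ Dmat a b i j = m + 1) ∧ b k = j := by
      intro k hk
      have hak : a k = i := by simpa using hk
      rw [changesWithin_update_iff hak]
      constructor
      · rintro ⟨⟨h, hbk⟩, hm⟩
        exact ⟨⟨h, by rw [← Dmat_update_add_one hij hak hbk, hm]⟩, hbk⟩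
      · rintro ⟨⟨h, hm⟩, hbk⟩
        exact ⟨⟨h, hbk⟩, by have := Dmat_update_add_one hij hak hbk; omega⟩
    simp only [ih]
    rw [sum_congr rfl fun k hk => if_congr (hstep k hk) rfl rfl]
    split_ifs with h
    · simp only [h, true_and]
      rw [← sum_filter, filter_filter, sum_const, ← Dmat_apply, h.2, nsmul_eq_mul,
        Nat.factorial_succ]
      push_cast
      ring
    · simp [h]

def relabelToward (i j : Fin p) (a b : Fin n → Fin p) : Fin n → Fin p :=
  fun k => if a k = i ∧ b k = j then j else a k

section relabelToward

variable {i j : Fin p} {L : List (Fin p × Fin p)} {a b : Fin n → Fin p}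

lemma changesWithin_relabelToward_left : ChangesWithin [(i, j)] a (relabelToward i j a b) := by
  intro k
  by_cases h : a k = i ∧ b k = j <;> simp [relabelToward, h]

lemma changesWithin_relabelToward_right_iff :
    ChangesWithin L (relabelToward i j a b) b ↔ ChangesWithin ((i, j) :: L) a b := by
  refine forall_congr' fun k => ?_
  by_cases h : a k = i ∧ b k = j
  · simp [relabelToward, h]
  · have : (a k, b k) ≠ (i, j) := fun e => h (Prod.mk.inj e)
    simp [relabelToward, h, this]

lemma Dmat_relabelToward_left (hij : i ≠ j) :
    Dmat a (relabelToward i j a b) i j = Dmat a b i j := by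
  simp only [Dmat_apply, relabelToward]
  congr 1
  refine filter_congr fun k _ => ?_
  by_cases h : a k = i ∧ b k = j
  · simp [h]
  · simp only [h, if_false, iff_false]
    exact fun ⟨hi, hj⟩ => hij (hi.symm.trans hj)

lemma Dmat_relabelToward_right {q : Fin p × Fin p} (hsrc : q.1 ≠ j) (hq : q ≠ (i, j)) :
    Dmat (relabelToward i j a b) b q.1 q.2 = Dmat a b q.1 q.2 := by
  simp only [Dmat_apply, relabelToward]
  congr 1
  refine filter_congr fun k _ => ?_
  by_cases h : a k = i ∧ b k = j
  · simp only [h, and_self, if_true]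
    exact ⟨fun h' => absurd h'.1.symm hsrc, fun ⟨h1, h2⟩ => absurd (by rw [h1, h2]) hq⟩
  · simp [h]

lemma eq_relabelToward (hij : i ≠ j) (hfresh : (i, j) ∉ L) (hsrc : ∀ q ∈ L, q.1 ≠ j)
    {c : Fin n → Fin p} (hac : ChangesWithin [(i, j)] a c) (hcb : ChangesWithin L c b) :
    c = relabelToward i j a b := by
  funext k
  simp only [ChangesWithin, List.mem_singleton, Prod.mk.injEq] at hac
  unfold relabelToward
  split_ifs with h
  · rcases hac k with hk | hk
    · rcases hcb k with hk' | hk'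
      · exact absurd (h.1.symm.trans (hk.trans (hk'.trans h.2))) hij
      · rw [← hk, h.1, h.2] at hk'
        exact absurd hk' hfresh
    · exact hk.2
  · rcases hac k with hk | hk
    · exact hk.symm
    · rcases hcb k with hk' | hk'
      · exact absurd ⟨hk.1, hk'.symm.trans hk.2⟩ h
      · exact absurd hk.2 (hsrc _ hk')

lemma isRelabeling_cons_iff (hij : i ≠ j) (hfresh : (i, j) ∉ L) (hsrc : ∀ q ∈ L, q.1 ≠ j)
    (D : Matrix (Fin p) (Fin p) ℕ) (c : Fin n → Fin p) :
    (IsRelabeling L D c b ∧ ChangesWithin [(i, j)] a c ∧ Dmat a c i j = D i j) ↔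
      c = relabelToward i j a b ∧ IsRelabeling ((i, j) :: L) D a b := by
  have hcount : ∀ q ∈ L, Dmat (relabelToward i j a b) b q.1 q.2 = Dmat a b q.1 q.2 :=
    fun q hq => Dmat_relabelToward_right (hsrc q hq) (ne_of_mem_of_not_mem hq hfresh)
  simp only [IsRelabeling, List.forall_mem_cons]
  constructor
  · rintro ⟨⟨hcb, hL⟩, hac, hD⟩
    obtain rfl := eq_relabelToward hij hfresh hsrc hac hcb
    refine ⟨rfl, changesWithin_relabelToward_right_iff.mp hcb, ?_, fun q hq => ?_⟩
    · rwa [← Dmat_relabelToward_left hij]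
    · rw [← hcount q hq, hL q hq]
  · rintro ⟨rfl, hab, hD, hL⟩
    refine ⟨⟨changesWithin_relabelToward_right_iff.mpr hab, fun q hq => ?_⟩,
      changesWithin_relabelToward_left, ?_⟩
    · rw [hcount q hq, hL q hq]
    · rwa [Dmat_relabelToward_left hij]

end relabelToward

lemma prod_pow_Aarrow_apply (D : Matrix (Fin p) (Fin p) ℕ) (L : List (Fin p × Fin p))
    (hL : ∀ q ∈ L, q.1 ≠ q.2) (hnd : L.Nodup) (hpw : L.Pairwise fun q q' => q'.1 ≠ q.2)
    (a b : Fin n → Fin p) :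
    (L.map fun q => Aarrow n p q.1 q.2 ^ D q.1 q.2).prod a b =
      if IsRelabeling L D a b then (((L.map fun q => (D q.1 q.2).factorial).prod : ℕ) : ℂ)
      else 0 := by
  induction L generalizing a with
  | nil =>
    simp [IsRelabeling, changesWithin_nil_iff, one_apply]
  | cons q L ih =>
    obtain ⟨i, j⟩ := q
    simp only [List.forall_mem_cons] at hL
    obtain ⟨hfresh, hnd⟩ := List.nodup_cons.mp hnd
    obtain ⟨hsrc, hpw⟩ := List.pairwise_cons.mp hpw
    simp only [List.map_cons, List.prod_cons, mul_apply, pow_Aarrow_apply hL.1,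
      ih hL.2 hnd hpw, ite_mul, mul_ite, zero_mul, mul_zero, ← ite_and,
      isRelabeling_cons_iff hL.1 hfresh hsrc]
    simp only [ite_and, sum_ite_eq', mem_univ, if_true]
    push_cast
    rfl

def lexPairs (p : ℕ) : List (Fin p × Fin p) :=
  (List.finRange p).flatMap fun j =>
    ((List.finRange p).filter fun i => decide (j < i)).map fun i => (i, j)

lemma mem_lexPairs {q : Fin p × Fin p} : q ∈ lexPairs p ↔ q.2 < q.1 := by
  simp [lexPairs, and_comm, Prod.ext_iff]

lemma pairwise_lexPairs :
    (lexPairs p).Pairwise fun q q' => q.2 < q'.2 ∨ (q.2 = q'.2 ∧ q.1 < q'.1) := by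
  simp only [lexPairs, List.pairwise_flatMap, List.pairwise_map, List.mem_map]
  refine ⟨fun j _ => ((List.pairwise_lt_finRange p).filter _).imp fun h => Or.inr ⟨trivial, h⟩,
    (List.pairwise_lt_finRange p).imp fun hjj' => ?_⟩
  rintro _ ⟨i, -, rfl⟩ _ ⟨i', -, rfl⟩
  exact Or.inl hjj'

lemma nodup_lexPairs : (lexPairs p).Nodup :=
  pairwise_lexPairs.imp fun h e => by
    subst e
    exact h.elim (lt_irrefl _) fun h => lt_irrefl _ h.2

lemma arrowProd_apply (D : Matrix (Fin p) (Fin p) ℕ) (a b : Fin n → Fin p) :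
    arrowProd n p D a b = if IsRelabeling (lexPairs p) D a b then
      ((∏ ij ∈ (univ : Finset (Fin p × Fin p)).filter (fun ij => ij.2 < ij.1),
        (D ij.1 ij.2).factorial : ℕ) : ℂ) else 0 := by
  have hprod : arrowProd n p D =
      ((lexPairs p).map fun q => Aarrow n p q.1 q.2 ^ D q.1 q.2).prod := by
    simp [arrowProd, lexPairs, List.flatMap, List.prod_flatten, List.map_flatten, Function.comp_def]
  have hfact : ∏ ij ∈ (univ : Finset (Fin p × Fin p)).filter (fun ij => ij.2 < ij.1),
      (D ij.1 ij.2).factorial = ((lexPairs p).map fun q => (D q.1 q.2).factorial).prod := by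
    rw [← List.prod_toFinset _ nodup_lexPairs]
    congr 1
    ext q
    simp [mem_lexPairs]
  rw [hprod, hfact]
  refine prod_pow_Aarrow_apply D _ (fun q hq => (mem_lexPairs.mp hq).ne') nodup_lexPairs
    (pairwise_lexPairs.imp_of_mem fun _ hq' h => ?_) a b
  have hq'2 := mem_lexPairs.mp hq'
  rcases h with h | ⟨h, -⟩
  · exact (h.trans hq'2).ne'
  · exact (h ▸ hq'2).ne'

lemma Dmat_eq_iff_isRelabeling {D : Matrix (Fin p) (Fin p) ℕ}
    (hlow : ∀ i j : Fin p, i < j → D i j = 0) (a b : Fin n → Fin p) :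
    Dmat a b = D ↔ IsRelabeling (lexPairs p) D a b ∧ ∀ s, #{k | b k = s} = ∑ r, D r s := by
  constructor
  · rintro rfl
    refine ⟨⟨fun k => ?_, fun _ _ => rfl⟩, fun s => (sum_Dmat_col a b s).symm⟩
    rw [mem_lexPairs]
    rcases lt_trichotomy (a k) (b k) with h | h | h
    · exact absurd (hlow _ _ h) (Dmat_apply_pos a b k).ne'
    · exact Or.inl h
    · exact Or.inr h
  · rintro ⟨⟨hab, hcount⟩, hcol⟩
    refine Matrix.eq_of_offDiag_eq_of_sum_col_eq (fun r s hrs => ?_) fun s => ?_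
    · rcases hrs.lt_or_gt with h | h
      · rw [hlow r s h, Dmat_eq_zero_iff]
        rintro k ⟨rfl, rfl⟩
        rcases hab k with h' | h'
        · exact h.ne h'
        · exact (mem_lexPairs.mp h').asymm h
      · exact hcount (r, s) (mem_lexPairs.mpr h)
    · rw [sum_Dmat_col, hcol]

theorem stmt_9_general (n p : ℕ)
    (D : Matrix (Fin p) (Fin p) ℕ)
    (hlow : ∀ i j : Fin p, i < j → D i j = 0) :
    ((∏ ij ∈ (Finset.univ : Finset (Fin p × Fin p)).filter (fun ij => ij.2 < ij.1),
        (D ij.1 ij.2).factorial : ℕ) : ℂ) • AD n p D =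
      arrowProd n p D * AD n p (Matrix.diagonal fun r => ∑ k, D k r) := by
  ext a b
  rw [mul_AD_diagonal_apply, arrowProd_apply, Matrix.smul_apply, AD, of_apply]
  simp only [Dmat_eq_iff_isRelabeling hlow, and_comm (a := IsRelabeling _ _ _ _), ite_and,
    smul_eq_mul, mul_ite, mul_one, mul_zero]

/-- for lower triangular `D ∈ P(n,p)` with column-sum vector `μ = Dᵀ𝟙`,
`(∏_{i>j} D_{i,j}!) A_D = (∏_{j<i} A_{i→j}^{D_{i,j}}) I_μ`, where
`I_μ = A_{μ_1 E_{1,1} + ⋯ + μ_p E_{p,p}}`. -/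
theorem stmt_9 (n p : ℕ) (hn : 1 ≤ n) (hp : 1 ≤ p)
    (D : Matrix (Fin p) (Fin p) ℕ) (hD : ∑ r, ∑ s, D r s = n)
    (hlow : ∀ i j : Fin p, i < j → D i j = 0) :
    ((∏ ij ∈ (Finset.univ : Finset (Fin p × Fin p)).filter (fun ij => ij.2 < ij.1),
        (D ij.1 ij.2).factorial : ℕ) : ℂ) • AD n p D =
      arrowProd n p D * AD n p (Matrix.diagonal fun r => ∑ k, D k r) :=
  stmt_9_general n p D hlow
end
end

section
/- For all i ≠ j in [p] and every matrix A ∈ ℂ^{[p]^n×[p]^n}: f_{A_{i→j}·A} = d_{i→j}(f_A) and f_{A·A_{i→j}} = d*_{i→j}(f_A), where d_{i→j} := Σ_{s=1}^{p} x_{i,s} ∂/∂x_{j,s} and d*_{i→j} := Σ_{s=1}^{p} x_{s,j} ∂/∂x_{s,i} are differential operators on ℂ[x_{i,j} : i,j ∈ [p]]. -/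
/-!
Expanding the trace gives `f_A = Σ_{a,b} conj(A_{a,b}) x^{D(a,b)}` with
`x^{D(a,b)} = ∏_k x_{a_k,b_k}`. As the operators are linear and `A_{i→j}` is real, the first
identity reduces to `d_{i→j} x^{D(c,b)} = Σ_a (A_{i→j})_{a,c} x^{D(a,b)}` for all words `c, b`,
and the second to the analogous statement for `d*_{i→j}` acting on the second word.
By the Leibniz rule, `x_{i,s} ∂/∂x_{j,s}` sends `∏_k x_{c_k,b_k}` to the sum, over the positions
`k` with `(c_k, b_k) = (j, s)`, of the same product with `c_k` replaced by `i`. Summed over `s`,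
this runs over the words obtained from `c` by turning one letter `j` into `i`, that is over the
`a` with `(A_{i→j})_{a,c} = 1`, each exactly once because `i ≠ j`.
-/

open scoped Classical
open Matrix

noncomputable section

/-- The polynomial `Q_k = k! · det((x_{i,j})_{1 ≤ i,j ≤ k})` in the variables
`x_{i,j}`, `i,j ∈ [p]` (for `k ≤ p`; `Q_0 = 1`). -/
noncomputable def Qpoly (p k : ℕ) : MvPolynomial (Fin p × Fin p) ℂ :=
  (k.factorial : MvPolynomial (Fin p × Fin p) ℂ) *
    Matrix.det (Matrix.of fun i j : Fin k =>
      if h : (i : ℕ) < p ∧ (j : ℕ) < p then MvPolynomial.X (⟨i, h.1⟩, ⟨j, h.2⟩) else 0)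

/-- The conjugate (dual) partition: `λ*_j = |{i : λ_i ≥ j}|`. -/
def conjPart (p : ℕ) (lam : Fin p → ℕ) (j : ℕ) : ℕ :=
  (Finset.univ.filter fun i : Fin p => j ≤ lam i).card

/-- The polynomial `P_λ = ∏_{j=1}^n Q_{λ*_j}`. -/
noncomputable def Ppoly (n p : ℕ) (lam : Fin p → ℕ) : MvPolynomial (Fin p × Fin p) ℂ :=
  ∏ j ∈ Finset.range n, Qpoly p (conjPart p lam (j + 1))

/-- The exponent (as a finitely supported function on `Fin p × Fin p`) of the monomial
`x^D` attached to `D ∈ ℕ^{p×p}`. -/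
noncomputable def expOf (p : ℕ) (D : Matrix (Fin p) (Fin p) ℕ) : (Fin p × Fin p) →₀ ℕ :=
  Finsupp.equivFunOnFinite.symm fun ij : Fin p × Fin p => D ij.1 ij.2

/-- The polynomial `f_A = Σ_{D ∈ P(n,p)} x^D ⟨A_D, A⟩`, where `⟨M,N⟩ = trace(N^*M)`
(matrices `D ∈ P(n,p)` are encoded with entries in `Fin (n+1)`). -/
noncomputable def fPoly (n p : ℕ) (A : Matrix (Fin n → Fin p) (Fin n → Fin p) ℂ) :
    MvPolynomial (Fin p × Fin p) ℂ :=
  ∑ D ∈ (Finset.univ : Finset (Fin p → Fin p → Fin (n + 1))).filter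
      (fun D => ∑ i, ∑ j, (D i j : ℕ) = n),
    MvPolynomial.monomial (expOf p (Matrix.of fun i j => (D i j : ℕ)))
      (Matrix.trace (Aᴴ * AD n p (Matrix.of fun i j => (D i j : ℕ))))

/-- The differential operator `d_{i→j} = Σ_s x_{i,s} ∂/∂x_{j,s}`. -/
noncomputable def dOp (p : ℕ) (i j : Fin p) :
    MvPolynomial (Fin p × Fin p) ℂ → MvPolynomial (Fin p × Fin p) ℂ :=
  fun g => ∑ s : Fin p, MvPolynomial.X (i, s) * MvPolynomial.pderiv (j, s) g

/-- The differential operator `d*_{i→j} = Σ_s x_{s,j} ∂/∂x_{s,i}`. -/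
noncomputable def dStarOp (p : ℕ) (i j : Fin p) :
    MvPolynomial (Fin p × Fin p) ℂ → MvPolynomial (Fin p × Fin p) ℂ :=
  fun g => ∑ s : Fin p, MvPolynomial.X (s, j) * MvPolynomial.pderiv (s, i) g

theorem Derivation.leibniz_finset_prod {R A M ι : Type*} [CommSemiring R] [CommSemiring A]
    [Algebra R A] [AddCommMonoid M] [Module A M] [Module R M] [DecidableEq ι]
    (D : Derivation R A M) (s : Finset ι) (f : ι → A) :
    D (∏ k ∈ s, f k) = ∑ k ∈ s, (∏ l ∈ s.erase k, f l) • D (f k) := by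
  induction s using Finset.induction_on with
  | empty => simp
  | insert a s ha ih =>
    rw [Finset.prod_insert ha, Derivation.leibniz, ih, Finset.sum_insert ha, Finset.erase_insert ha,
      Finset.smul_sum, add_comm]
    congr 1
    refine Finset.sum_congr rfl fun k hk => ?_
    rw [Finset.erase_insert_of_ne (ne_of_mem_of_not_mem hk ha).symm,
      Finset.prod_insert fun h => ha (Finset.mem_of_mem_erase h), smul_smul]

namespace MvPolynomial

variable {R σ ι : Type*} [CommSemiring R] [DecidableEq σ] [Fintype ι] [DecidableEq ι]

theorem pderiv_prod_X (w : ι → σ) (v : σ) :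
    pderiv v (∏ k, X (w k) : MvPolynomial σ R) =
      ∑ k with w k = v, ∏ l ∈ Finset.univ.erase k, X (w l) := by
  rw [Derivation.leibniz_finset_prod, Finset.sum_filter]
  refine Finset.sum_congr rfl fun k _ => ?_
  by_cases h : w k = v
  · simp [h]
  · simp [h, pderiv_X_of_ne h]

theorem X_mul_pderiv_prod_X (w : ι → σ) (u v : σ) :
    X u * pderiv v (∏ k, X (w k) : MvPolynomial σ R) =
      ∑ k with w k = v, ∏ l, X (Function.update w k u l) := by
  rw [pderiv_prod_X, Finset.mul_sum]
  refine Finset.sum_congr rfl fun k _ => ?_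
  rw [← Finset.mul_prod_erase _ _ (Finset.mem_univ k), Function.update_self]
  congr 1
  exact Finset.prod_congr rfl fun l hl => by rw [Function.update_of_ne (Finset.ne_of_mem_erase hl)]

end MvPolynomial

theorem sum_ite_exists_update_eq {α β M : Type*} [Fintype α] [DecidableEq α] [Fintype β]
    [DecidableEq β] [AddCommMonoid M] {x y : β} (hxy : x ≠ y) (c : α → β) (f : (α → β) → M)
    [DecidablePred fun a => ∃ k, c k = y ∧ a = Function.update c k x] :
    ∑ a, (if ∃ k, c k = y ∧ a = Function.update c k x then f a else 0) =
      ∑ k with c k = y, f (Function.update c k x) := by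
  have hinj : Set.InjOn (fun k => Function.update c k x) {k | c k = y} := by
    intro k hk k' hk' h
    by_contra hne
    have := congrFun h k
    simp only [Function.update_self, Function.update_of_ne hne] at this
    exact hxy (this.trans hk)
  rw [← Finset.sum_image (by simpa using hinj), ← Finset.sum_filter]
  congr 1
  ext a
  simp [eq_comm]

section WordMonomials

open MvPolynomial

variable {n p : ℕ}

theorem expOf_Dmat (a b : Fin n → Fin p) :
    expOf p (Dmat a b) = ∑ k, Finsupp.single (a k, b k) 1 := by
  ext ⟨r, s⟩
  show Dmat a b r s = _
  rw [Finsupp.finsetSum_apply]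
  simp only [Dmat, Matrix.of_apply, Finset.card_filter, Finsupp.single_apply, Prod.mk.injEq]

theorem monomial_expOf_Dmat (a b : Fin n → Fin p) (z : ℂ) :
    monomial (expOf p (Dmat a b)) z = z • ∏ k, X (a k, b k) := by
  rw [expOf_Dmat, monomial_sum_index, smul_eq_C_mul]
  rfl

theorem sum_Dmat (a b : Fin n → Fin p) : ∑ i, ∑ j, Dmat a b i j = n := by
  have hfib := Finset.card_eq_sum_card_fiberwise (s := Finset.univ) (t := Finset.univ)
    (f := fun k : Fin n => (a k, b k)) fun _ _ => Finset.mem_univ _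
  rw [← Fintype.sum_prod_type' fun i j => Dmat a b i j]
  simpa [Dmat, Prod.ext_iff] using hfib.symm

theorem Dmat_le (a b : Fin n → Fin p) (i j : Fin p) : Dmat a b i j ≤ n :=
  (Finset.card_filter_le _ _).trans_eq (Finset.card_fin n)

theorem trace_conjTranspose_mul_AD (A : Matrix (Fin n → Fin p) (Fin n → Fin p) ℂ)
    (D : Matrix (Fin p) (Fin p) ℕ) :
    trace (Aᴴ * AD n p D) = ∑ a, ∑ b, if Dmat a b = D then star (A a b) else 0 := by
  simp only [trace, diag, mul_apply, conjTranspose_apply, AD, of_apply, mul_ite, mul_one, mul_zero]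
  exact Finset.sum_comm

theorem fPoly_eq_sum (A : Matrix (Fin n → Fin p) (Fin n → Fin p) ℂ) :
    fPoly n p A = ∑ a, ∑ b, star (A a b) • ∏ k, X (a k, b k) := by
  simp only [fPoly, trace_conjTranspose_mul_AD, map_sum, apply_ite (monomial _), map_zero]
  rw [Finset.sum_comm]
  refine Finset.sum_congr rfl fun a _ => ?_
  rw [Finset.sum_comm]
  refine Finset.sum_congr rfl fun b _ => ?_
  let code : Fin p → Fin p → Fin (n + 1) := fun i j =>
    ⟨Dmat a b i j, Nat.lt_succ_of_le (Dmat_le a b i j)⟩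
  rw [Finset.sum_eq_single_of_mem code (by simp [code, sum_Dmat])]
  · have hcode : (of fun i j => (code i j : ℕ)) = Dmat a b := rfl
    rw [hcode, if_pos rfl, monomial_expOf_Dmat]
  · intro D _ hD
    rw [if_neg]
    intro h
    exact hD (funext₂ fun i j => Fin.ext (congrFun₂ h i j).symm)

theorem fPoly_mul_left (B A : Matrix (Fin n → Fin p) (Fin n → Fin p) ℂ)
    (L : MvPolynomial (Fin p × Fin p) ℂ →ₗ[ℂ] MvPolynomial (Fin p × Fin p) ℂ)
    (hL : ∀ c b : Fin n → Fin p, L (∏ k, X (c k, b k)) = ∑ a, star (B a c) • ∏ k, X (a k, b k)) :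
    fPoly n p (B * A) = L (fPoly n p A) := by
  simp only [fPoly_eq_sum, map_sum, map_smul, hL, mul_apply, star_sum, star_mul',
    Finset.smul_sum, Finset.sum_smul, smul_smul]
  simp only [mul_comm (star (A _ _))]
  exact (Finset.sum_congr rfl fun _ _ => Finset.sum_comm).trans
    (Finset.sum_comm.trans (Finset.sum_congr rfl fun _ _ => Finset.sum_comm))

theorem fPoly_mul_right (A B : Matrix (Fin n → Fin p) (Fin n → Fin p) ℂ)
    (L : MvPolynomial (Fin p × Fin p) ℂ →ₗ[ℂ] MvPolynomial (Fin p × Fin p) ℂ)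
    (hL : ∀ a c : Fin n → Fin p, L (∏ k, X (a k, c k)) = ∑ b, star (B c b) • ∏ k, X (a k, b k)) :
    fPoly n p (A * B) = L (fPoly n p A) := by
  simp only [fPoly_eq_sum, map_sum, map_smul, hL, mul_apply, star_sum, star_mul',
    Finset.smul_sum, Finset.sum_smul, smul_smul]
  exact Finset.sum_congr rfl fun _ _ => Finset.sum_comm

theorem Aarrow_apply_eq_ite_update_right (i j : Fin p) (a b : Fin n → Fin p) :
    Aarrow n p i j a b = if ∃ k, b k = j ∧ a = Function.update b k i then 1 else 0 := by
  simp only [Aarrow, of_apply, Function.eq_update_iff, and_left_comm]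

theorem Aarrow_apply_eq_ite_update_left (i j : Fin p) (a b : Fin n → Fin p) :
    Aarrow n p i j a b = if ∃ k, a k = i ∧ b = Function.update a k j then 1 else 0 := by
  simp only [Aarrow, of_apply, Function.eq_update_iff, ne_comm, eq_comm]

theorem dOp_eq_linearMap (i j : Fin p) :
    dOp p i j = ⇑(∑ s, LinearMap.mulLeft ℂ (X (i, s)) ∘ₗ (pderiv (j, s)).toLinearMap) := by
  ext g
  simp [dOp]

theorem dStarOp_eq_linearMap (i j : Fin p) :
    dStarOp p i j = ⇑(∑ s, LinearMap.mulLeft ℂ (X (s, j)) ∘ₗ (pderiv (s, i)).toLinearMap) := by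
  ext g
  simp [dStarOp]

theorem update_prodMk_left {α β γ : Type*} [DecidableEq α] (c : α → β) (b : α → γ) (k : α)
    (x : β) :
    Function.update (fun l => (c l, b l)) k (x, b k) = fun l => (Function.update c k x l, b l) := by
  funext l
  by_cases hl : l = k
  · subst hl; simp
  · simp [hl]

theorem update_prodMk_right {α β γ : Type*} [DecidableEq α] (a : α → β) (c : α → γ) (k : α)
    (y : γ) :
    Function.update (fun l => (a l, c l)) k (a k, y) = fun l => (a l, Function.update c k y l) := by
  funext l
  by_cases hl : l = k
  · subst hl; simp
  · simp [hl]

theorem dOp_prod_X {i j : Fin p} (hij : i ≠ j) (c b : Fin n → Fin p) :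
    dOp p i j (∏ k, X (c k, b k)) = ∑ a, star (Aarrow n p i j a c) • ∏ k, X (a k, b k) := by
  have hstar : ∀ a : Fin n → Fin p, star (Aarrow n p i j a c) • ∏ k, X (a k, b k) =
      if ∃ k, c k = j ∧ a = Function.update c k i then
        (∏ k, X (a k, b k) : MvPolynomial (Fin p × Fin p) ℂ) else 0 := by
    intro a
    rw [Aarrow_apply_eq_ite_update_right]
    split_ifs <;> simp
  simp only [hstar]
  rw [sum_ite_exists_update_eq hij, Finset.sum_filter]
  simp only [dOp, X_mul_pderiv_prod_X (fun l => (c l, b l)), Finset.sum_filter, Prod.mk.injEq,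
    ite_and]
  rw [Finset.sum_comm]
  refine Finset.sum_congr rfl fun k _ => ?_
  split_ifs <;> simp [update_prodMk_left]

theorem dStarOp_prod_X {i j : Fin p} (hij : i ≠ j) (a c : Fin n → Fin p) :
    dStarOp p i j (∏ k, X (a k, c k)) = ∑ b, star (Aarrow n p i j c b) • ∏ k, X (a k, b k) := by
  have hstar : ∀ b : Fin n → Fin p, star (Aarrow n p i j c b) • ∏ k, X (a k, b k) =
      if ∃ k, c k = i ∧ b = Function.update c k j then
        (∏ k, X (a k, b k) : MvPolynomial (Fin p × Fin p) ℂ) else 0 := by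
    intro b
    rw [Aarrow_apply_eq_ite_update_left]
    split_ifs <;> simp
  simp only [hstar]
  rw [sum_ite_exists_update_eq hij.symm, Finset.sum_filter]
  simp only [dStarOp, X_mul_pderiv_prod_X (fun l => (a l, c l)), Finset.sum_filter, Prod.mk.injEq,
    ite_and]
  rw [Finset.sum_comm]
  refine Finset.sum_congr rfl fun k _ => ?_
  split_ifs <;> simp [update_prodMk_right]

end WordMonomials

theorem stmt_10_general (n p : ℕ) (i j : Fin p) (hij : i ≠ j)
    (A : Matrix (Fin n → Fin p) (Fin n → Fin p) ℂ) :
    fPoly n p (Aarrow n p i j * A) = dOp p i j (fPoly n p A) ∧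
    fPoly n p (A * Aarrow n p i j) = dStarOp p i j (fPoly n p A) := by
  constructor
  · rw [dOp_eq_linearMap]
    exact fPoly_mul_left _ _ _ fun c b => by rw [← dOp_eq_linearMap, dOp_prod_X hij]
  · rw [dStarOp_eq_linearMap]
    exact fPoly_mul_right _ _ _ fun a c => by rw [← dStarOp_eq_linearMap, dStarOp_prod_X hij]

/-- for `i ≠ j` and any matrix `A`,
`f_{A_{i→j}·A} = d_{i→j}(f_A)` and `f_{A·A_{i→j}} = d*_{i→j}(f_A)`. -/
theorem stmt_10 (n p : ℕ) (hn : 1 ≤ n) (hp : 1 ≤ p) (i j : Fin p) (hij : i ≠ j)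
    (A : Matrix (Fin n → Fin p) (Fin n → Fin p) ℂ) :
    fPoly n p (Aarrow n p i j * A) = dOp p i j (fPoly n p A) ∧
    fPoly n p (A * Aarrow n p i j) = dStarOp p i j (fPoly n p A) :=
  stmt_10_general n p i j hij A
end
end
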